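/- arXiv:2503.04923 — 8 statements merged into one kernel-verified Lean document; each statement's English description precedes it below -/
import Mathlib

section
/- For all integers n > 0 and 0 < k < n, there exists a bijection between the set of (k,n)-source Grassmann necklaces and the set of (k,n)-bounded affine permutations. -/
/-- A `(k,n)`-source Grassmann necklace, encoded as an `n`-periodic function
`I : ℕ → Finset ℕ` (the entries `I 1, …, I n` form the necklace, and
periodicity provides the convention `I 0 = I n`). -/
def IsSourceGN (n k : ℕ) (I : ℕ → Finset ℕ) : Prop :=
  (∀ r, I (r + n) = I r) ∧
  (∀ r ∈ Finset.Icc 1 n, (I r).card = k ∧ I r ⊆ Finset.Icc 1 n) ∧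
  (∀ i ∈ Finset.Icc 1 n,
    (i ∈ I i → ∃ j ∈ Finset.Icc 1 n, I (i - 1) = insert j (I i \ {i})) ∧
    (i ∉ I i → I (i - 1) = I i))

/-- A `(k,n)`-bounded affine permutation. -/
def IsBoundedAffinePerm (n k : ℕ) (f : ℤ → ℤ) : Prop :=
  Function.Bijective f ∧
  (∀ i : ℤ, f (i + n) = f i + n) ∧
  (∀ i : ℤ, i ≤ f i ∧ f i ≤ i + n) ∧
  (∑ i ∈ Finset.Icc (1 : ℤ) (n : ℤ), (f i - i)) = (n : ℤ) * (k : ℤ)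

/-!
A bounded affine permutation `f` gives the necklace whose `i`-th set consists of the residues of
the positions `t ∈ (i - n, i]` with `i < f t`; passing from the `i`-th set to the `(i - 1)`-th one
removes `i` and adds the residue of `f⁻¹ i`. Conversely a source necklace prescribes `f⁻¹` on
`[1, n]`: `f⁻¹ i = i` if `i ∉ I i`, and otherwise `f⁻¹ i` is the representative in `[i - n, i)`
of the element exchanged for `i`. That this is a permutation follows by counting: going once
around the necklace, every element enters as often as it leaves. The parameter `k` matches on
both sides because `t ↦ f t mod n` permutes every window of `n` consecutive positions, which
gives `n * #(I i) = ∑ j ∈ [1, n], (f j - j)`.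
-/

open Finset Function

section Residues

variable {n : ℕ}

def reprIoc (n : ℕ) (x y : ℤ) : ℤ := x - (x - y) % n

theorem reprIoc_mem_Ioc (hn : 0 < n) (x y : ℤ) : reprIoc n x y ∈ Ioc (x - n) x := by
  have h0 := Int.emod_nonneg (x - y) (b := n) (by omega)
  have h1 := Int.emod_lt_of_pos (x - y) (b := n) (by omega)
  simp only [reprIoc, mem_Ioc]
  omega

theorem reprIoc_modEq (x y : ℤ) : reprIoc n x y ≡ y [ZMOD n] := by
  simpa [reprIoc] using (Int.mod_modEq (x - y) n).sub_left x

theorem reprIoc_congr {x y y' : ℤ} (h : y ≡ y' [ZMOD n]) : reprIoc n x y = reprIoc n x y' := by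
  rw [reprIoc, reprIoc, h.sub_left x]

theorem eq_reprIoc {x y z : ℤ} (hz : z ∈ Ioc (x - n) x) (h : z ≡ y [ZMOD n]) :
    z = reprIoc n x y := by
  simp only [mem_Ioc] at hz
  rw [← reprIoc_congr h, reprIoc, Int.emod_eq_of_lt] <;> omega

theorem Int.ModEq.eq_of_mem_Ioc {x z z' : ℤ} (hz : z ∈ Ioc (x - n) x) (hz' : z' ∈ Ioc (x - n) x)
    (h : z ≡ z' [ZMOD n]) : z = z' :=
  (eq_reprIoc hz h).trans (eq_reprIoc hz' rfl).symm

theorem reprIoc_add_right (x y : ℤ) : reprIoc n (x + n) y = reprIoc n x y + n := by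
  simp only [reprIoc, add_sub_right_comm x, Int.add_emod_right]

theorem reprIoc_sub_one {x y : ℤ} (hn : 0 < n) (h : ¬ y ≡ x [ZMOD n]) :
    reprIoc n (x - 1) y = reprIoc n x y := by
  have hmem := reprIoc_mem_Ioc hn x y
  have hne : reprIoc n x y ≠ x := fun hx => h ((reprIoc_modEq x y).symm.trans (by rw [hx]))
  simp only [mem_Ioc] at hmem
  exact (eq_reprIoc (z := reprIoc n x y) (by simp only [mem_Ioc]; omega) (reprIoc_modEq x y)).symm

theorem reprIoc_sub_one_self (hn : 0 < n) (x : ℤ) : reprIoc n (x - 1) x = x - n :=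
  (eq_reprIoc (by simp only [mem_Ioc]; omega) (by simp [Int.modEq_iff_dvd])).symm

def residue (n : ℕ) (x : ℤ) : ℕ := (reprIoc n n x).toNat

theorem coe_residue (hn : 0 < n) (x : ℤ) : (residue n x : ℤ) = reprIoc n n x := by
  have := reprIoc_mem_Ioc hn n x
  simp only [mem_Ioc] at this
  exact Int.toNat_of_nonneg (by omega)

theorem residue_mem (hn : 0 < n) (x : ℤ) : residue n x ∈ Icc 1 n := by
  have := reprIoc_mem_Ioc hn n x
  rw [← coe_residue hn] at this
  simp only [mem_Ioc, mem_Icc] at this ⊢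
  omega

theorem residue_modEq (hn : 0 < n) (x : ℤ) : (residue n x : ℤ) ≡ x [ZMOD n] := by
  rw [coe_residue hn]
  exact reprIoc_modEq _ _

theorem residue_eq_of_modEq {r : ℕ} {x : ℤ} (hr : r ∈ Icc 1 n) (h : (r : ℤ) ≡ x [ZMOD n]) :
    residue n x = r := by
  have hr' : (r : ℤ) ∈ Ioc ((n : ℤ) - n) n := by simp only [mem_Icc, mem_Ioc] at hr ⊢; omega
  rw [residue, ← eq_reprIoc hr' h, Int.toNat_natCast]

theorem residue_natCast {r : ℕ} (hr : r ∈ Icc 1 n) : residue n r = r :=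
  residue_eq_of_modEq hr rfl

theorem residue_eq_residue_iff (hn : 0 < n) {x y : ℤ} :
    residue n x = residue n y ↔ x ≡ y [ZMOD n] :=
  ⟨fun h => (residue_modEq hn x).symm.trans (h ▸ residue_modEq hn y),
    fun h => residue_eq_of_modEq (residue_mem hn y) ((residue_modEq hn y).trans h.symm)⟩

theorem residue_add_self (x : ℤ) : residue n (x + n) = residue n x := by
  rw [residue, residue, reprIoc_congr (by simp [Int.modEq_iff_dvd] : x + n ≡ x [ZMOD n])]

theorem eq_of_modEq_of_mem_Icc {r s : ℕ} (hr : r ∈ Icc 1 n) (hs : s ∈ Icc 1 n)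
    (h : (r : ℤ) ≡ s [ZMOD n]) : r = s :=
  (residue_eq_of_modEq hr h).symm.trans (residue_natCast hs)

theorem sum_comp_reprIoc {M : Type*} [AddCommMonoid M] (hn : 0 < n) (x : ℤ) (φ : ℤ → M) :
    ∑ r ∈ Icc 1 n, φ (reprIoc n x r) = ∑ t ∈ Ioc (x - n) x, φ t :=
  sum_nbij' (fun r : ℕ => reprIoc n x r) (residue n) (fun r _ => reprIoc_mem_Ioc hn x r)
    (fun t _ => residue_mem hn t)
    (fun r hr => residue_eq_of_modEq hr (reprIoc_modEq x r).symm)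
    (fun t ht => (eq_reprIoc ht (residue_modEq hn t).symm).symm) (fun _ _ => rfl)

end Residues

section EquivariantMaps

variable {n : ℕ} {f : ℤ → ℤ}

theorem map_add_mul_of_map_add (hf : ∀ x, f (x + n) = f x + n) (x m : ℤ) :
    f (x + m * n) = f x + m * n := by
  have hper : Periodic (fun x => f x - x) n := fun x => by simp only [hf]; ring
  have := hper.int_mul m x
  rw [Int.cast_id] at this
  linarith

theorem map_sub_self_eq_of_modEq (hf : ∀ x, f (x + n) = f x + n) {a b : ℤ}
    (h : a ≡ b [ZMOD n]) : f b - b = f a - a := by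
  obtain ⟨m, hm⟩ := h.dvd
  rw [show b = a + m * n by linarith, map_add_mul_of_map_add hf]
  ring

theorem modEq_of_map_modEq (hf : ∀ x, f (x + n) = f x + n) (hinj : Injective f) {a b : ℤ}
    (h : f a ≡ f b [ZMOD n]) : a ≡ b [ZMOD n] := by
  obtain ⟨m, hm⟩ := h.dvd
  have : f b = f (a + m * n) := by rw [map_add_mul_of_map_add hf]; linarith
  exact Int.modEq_iff_dvd.mpr ⟨m, by rw [hinj this]; ring⟩

theorem bijective_of_map_add (hn : 0 < n) (hf : ∀ x, f (x + n) = f x + n)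
    (hmod : ∀ a b, f a ≡ f b [ZMOD n] → a ≡ b [ZMOD n]) : Bijective f := by
  refine ⟨fun a b hab => ?_, fun y => ?_⟩
  · have := map_sub_self_eq_of_modEq hf (hmod a b (hab ▸ rfl))
    linarith
  have hmaps : Set.MapsTo (fun r : ℕ => residue n (f r)) (Icc 1 n) (Icc 1 n) :=
    fun r _ => residue_mem hn _
  have hinj : Set.InjOn (fun r : ℕ => residue n (f r)) (Icc 1 n) := fun r hr r' hr' h =>
    eq_of_modEq_of_mem_Icc hr hr' (hmod r r' ((residue_eq_residue_iff hn).mp h))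
  obtain ⟨r, -, hry⟩ := surjOn_of_injOn_of_card_le _ hmaps hinj le_rfl (residue_mem hn y)
  obtain ⟨m, hm⟩ := ((residue_eq_residue_iff hn).mp hry).dvd
  exact ⟨r + m * n, by rw [map_add_mul_of_map_add hf]; linarith⟩

end EquivariantMaps

open Classical in
noncomputable def exchange (I : ℕ → Finset ℕ) (i : ℕ) : ℕ :=
  if h : ∃ j, I (i - 1) = insert j (I i \ {i}) then h.choose else i

namespace IsSourceGN

variable {n k : ℕ} {I : ℕ → Finset ℕ} (hI : IsSourceGN n k I)
include hI

theorem apply_zero : I 0 = I n := by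
  simpa using (hI.1 0).symm

theorem apply_sub_one_eq {i : ℕ} (hi : i ∈ Icc 1 n) : ∃ r ∈ Icc 1 n, I (i - 1) = I r := by
  simp only [mem_Icc] at hi ⊢
  rcases eq_or_lt_of_le hi.1 with rfl | h
  · exact ⟨n, ⟨hi.2, le_rfl⟩, hI.apply_zero⟩
  · exact ⟨i - 1, ⟨by omega, by omega⟩, rfl⟩

theorem card_sub_one {i : ℕ} (hi : i ∈ Icc 1 n) : (I (i - 1)).card = k := by
  obtain ⟨r, hr, h⟩ := hI.apply_sub_one_eq hi
  exact h ▸ (hI.2.1 r hr).1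

theorem sub_one_subset {i : ℕ} (hi : i ∈ Icc 1 n) : I (i - 1) ⊆ Icc 1 n := by
  obtain ⟨r, hr, h⟩ := hI.apply_sub_one_eq hi
  exact h ▸ (hI.2.1 r hr).2

theorem notMem_of_sub_one_eq_insert {i j : ℕ} (hi : i ∈ Icc 1 n) (hmem : i ∈ I i)
    (hj : I (i - 1) = insert j (I i \ {i})) : j ∉ I i \ {i} := by
  intro h
  have hcard := hI.card_sub_one hi
  rw [hj, insert_eq_of_mem h, sdiff_singleton_eq_erase, card_erase_of_mem hmem,
    (hI.2.1 i hi).1] at hcard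
  have := card_pos.mpr ⟨i, hmem⟩
  rw [(hI.2.1 i hi).1] at this
  omega

theorem sub_one_eq_insert_exchange {i : ℕ} (hi : i ∈ Icc 1 n) (hmem : i ∈ I i) :
    I (i - 1) = insert (exchange I i) (I i \ {i}) := by
  obtain ⟨j, -, hj⟩ := (hI.2.2 i hi).1 hmem
  have h : ∃ j, I (i - 1) = insert j (I i \ {i}) := ⟨j, hj⟩
  rw [exchange, dif_pos h]
  exact h.choose_spec

theorem exchange_eq {i j : ℕ} (hi : i ∈ Icc 1 n) (hmem : i ∈ I i)
    (hj : I (i - 1) = insert j (I i \ {i})) : exchange I i = j := by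
  have he := hI.sub_one_eq_insert_exchange hi hmem
  exact (insert_inj (hI.notMem_of_sub_one_eq_insert hi hmem he)).mp (he.symm.trans hj)

theorem sub_one_eq_of_notMem {i : ℕ} (hi : i ∈ Icc 1 n) (h : i ∉ I i) : I (i - 1) = I i :=
  (hI.2.2 i hi).2 h

theorem exchange_mem_sub_one {i : ℕ} (hi : i ∈ Icc 1 n) (hmem : i ∈ I i) :
    exchange I i ∈ I (i - 1) := by
  rw [hI.sub_one_eq_insert_exchange hi hmem]
  exact mem_insert_self _ _

theorem mem_iff_of_ne {i r : ℕ} (hi : i ∈ Icc 1 n) (hri : r ≠ i) :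
    r ∈ I i ↔ r ∈ I (i - 1) ∧ ¬ (i ∈ I i ∧ exchange I i = r) := by
  by_cases hmem : i ∈ I i
  · have hnot := hI.notMem_of_sub_one_eq_insert hi hmem (hI.sub_one_eq_insert_exchange hi hmem)
    rw [hI.sub_one_eq_insert_exchange hi hmem, mem_insert, mem_sdiff, mem_singleton]
    constructor
    · intro h
      exact ⟨Or.inr ⟨h, hri⟩, fun ⟨_, he⟩ => hnot (he ▸ mem_sdiff.mpr ⟨h, by simpa using hri⟩)⟩
    · rintro ⟨h | h, he⟩
      · exact absurd ⟨hmem, h.symm⟩ he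
      · exact h.1
  · simp [hI.sub_one_eq_of_notMem hi hmem, hmem]

theorem self_mem_sub_one_iff {i : ℕ} (hi : i ∈ Icc 1 n) :
    i ∈ I (i - 1) ↔ i ∈ I i ∧ exchange I i = i := by
  by_cases hmem : i ∈ I i
  · simp [hI.sub_one_eq_insert_exchange hi hmem, hmem, eq_comm]
  · simp [hI.sub_one_eq_of_notMem hi hmem, hmem]

theorem ite_mem_sub_ite_mem_sub_one {i r : ℕ} (hi : i ∈ Icc 1 n) :
    ((if r ∈ I i then 1 else 0) - if r ∈ I (i - 1) then 1 else 0 : ℤ) =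
      (if i = r ∧ r ∈ I r then 1 else 0) - if i ∈ I i ∧ exchange I i = r then 1 else 0 := by
  rcases eq_or_ne r i with rfl | hri
  · simp only [hI.self_mem_sub_one_iff hi]
    by_cases h : exchange I r = r <;> simp [h]
  · have hmem : i ∈ I i ∧ exchange I i = r → r ∈ I (i - 1) := fun ⟨hmem, he⟩ =>
      he ▸ hI.exchange_mem_sub_one hi hmem
    simp only [hI.mem_iff_of_ne hi hri, hri.symm, false_and, if_false]
    by_cases h : i ∈ I i ∧ exchange I i = r <;> simp [h, hmem]

/-- Telescoping `[r ∈ I i] - [r ∈ I (i - 1)]` once around the necklace: `r` enters once if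
`r ∈ I r`, and leaves once for each `i ∈ I i` exchanged for `r`. -/
theorem card_filter_exchange_eq {r : ℕ} (hr : r ∈ Icc 1 n) :
    ((Icc 1 n).filter fun i => i ∈ I i ∧ exchange I i = r).card = if r ∈ I r then 1 else 0 := by
  have hsum : ∀ (p : ℕ → Prop) [DecidablePred p],
      ∑ i ∈ range n, (if p (i + 1) then (1 : ℤ) else 0) = ((Icc 1 n).filter p).card := by
    intro p _
    rw [card_filter, Nat.cast_sum, range_eq_Ico,
      sum_Ico_add' (fun i => if p i then (1 : ℤ) else 0), zero_add, Ico_add_one_right_eq_Icc]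
    simp
  have hstep : ∀ i ∈ range n,
      ((if r ∈ I (i + 1) then 1 else 0) - if r ∈ I i then 1 else 0 : ℤ) =
        (if i + 1 = r ∧ r ∈ I r then 1 else 0) -
          if i + 1 ∈ I (i + 1) ∧ exchange I (i + 1) = r then 1 else 0 := fun i hi =>
    hI.ite_mem_sub_ite_mem_sub_one (by simp only [mem_range, mem_Icc] at hi ⊢; omega)
  have htel := sum_range_sub (fun i => if r ∈ I i then (1 : ℤ) else 0) n
  rw [sum_congr rfl hstep, sum_sub_distrib, hsum (· = r ∧ r ∈ I r),
    hsum fun i => i ∈ I i ∧ exchange I i = r, hI.apply_zero.symm, sub_self,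
    sub_eq_zero] at htel
  by_cases hrr : r ∈ I r <;>
    simp only [hrr, and_true, and_false, filter_eq', hr, if_true, if_false, filter_false,
      card_singleton, card_empty, Nat.cast_one] at htel ⊢ <;>
    exact_mod_cast htel.symm

theorem exchange_mem_Icc {i : ℕ} (hi : i ∈ Icc 1 n) (hmem : i ∈ I i) : exchange I i ∈ Icc 1 n :=
  hI.sub_one_subset hi (hI.exchange_mem_sub_one hi hmem)

theorem exchange_mem_self {i : ℕ} (hi : i ∈ Icc 1 n) (hmem : i ∈ I i) :
    exchange I i ∈ I (exchange I i) := by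
  have hcard := hI.card_filter_exchange_eq (hI.exchange_mem_Icc hi hmem)
  by_contra h
  rw [if_neg h, card_eq_zero, filter_eq_empty_iff] at hcard
  exact hcard hi ⟨hmem, rfl⟩

theorem eq_of_exchange_eq {i i' : ℕ} (hi : i ∈ Icc 1 n) (hi' : i' ∈ Icc 1 n) (hmem : i ∈ I i)
    (hmem' : i' ∈ I i') (h : exchange I i = exchange I i') : i = i' := by
  have hcard := hI.card_filter_exchange_eq (hI.exchange_mem_Icc hi hmem)
  exact card_le_one.mp (hcard.trans_le (by split_ifs <;> simp)) i (mem_filter.mpr ⟨hi, hmem, rfl⟩)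
    i' (mem_filter.mpr ⟨hi', hmem', h.symm⟩)

theorem mem_iff_forall_Ioc {r i : ℕ} (hri : r ≤ i) (hin : i ≤ n) :
    r ∈ I i ↔ r ∈ I r ∧ ∀ t ∈ Ioc r i, ¬ (t ∈ I t ∧ exchange I t = r) := by
  induction i, hri using Nat.le_induction with
  | base => simp
  | succ i hri ih =>
    have hi : i + 1 ∈ Icc 1 n := by simp only [mem_Icc]; omega
    rw [hI.mem_iff_of_ne hi (by omega), add_tsub_cancel_right, ih (by omega), and_assoc]
    refine and_congr_right fun _ => ⟨fun ⟨h, hlast⟩ t ht => ?_, fun h => ⟨fun t ht => ?_, ?_⟩⟩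
    · simp only [mem_Ioc] at ht
      rcases (by omega : t ≤ i ∨ t = i + 1) with hti | rfl
      · exact h t (by simp only [mem_Ioc]; omega)
      · exact hlast
    · exact h t (by simp only [mem_Ioc] at ht ⊢; omega)
    · exact h (i + 1) (by simp only [mem_Ioc]; omega)

theorem mem_zero_iff (hn : 0 < n) {r : ℕ} :
    r ∈ I 0 ↔ r ∈ Icc 1 n ∧ r ∈ I r ∧ ∀ t ∈ Ioc r n, ¬ (t ∈ I t ∧ exchange I t = r) := by
  have hnI : n ∈ Icc 1 n := by simp only [mem_Icc]; omega
  rw [hI.apply_zero]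
  refine ⟨fun h => ?_, fun ⟨hr, h⟩ => ?_⟩
  · have hr := (hI.2.1 n hnI).2 h
    exact ⟨hr, (hI.mem_iff_forall_Ioc (mem_Icc.mp hr).2 le_rfl).mp h⟩
  · exact (hI.mem_iff_forall_Ioc (mem_Icc.mp hr).2 le_rfl).mpr h

theorem ext {k' : ℕ} {I' : ℕ → Finset ℕ} (hI' : IsSourceGN n k' I') (hn : 0 < n)
    (hmem : ∀ i ∈ Icc 1 n, i ∈ I i ↔ i ∈ I' i)
    (hex : ∀ i ∈ Icc 1 n, i ∈ I i → exchange I i = exchange I' i) : I = I' := by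
  have key : ∀ t ∈ Icc 1 n, ∀ r, (t ∈ I t ∧ exchange I t = r) ↔ (t ∈ I' t ∧ exchange I' t = r) :=
    fun t ht r => ⟨fun ⟨h1, h2⟩ => ⟨(hmem t ht).1 h1, (hex t ht h1).symm.trans h2⟩,
      fun ⟨h1, h2⟩ => ⟨(hmem t ht).2 h1, (hex t ht ((hmem t ht).2 h1)).trans h2⟩⟩
  have hzero : I 0 = I' 0 := by
    ext r
    rw [hI.mem_zero_iff hn, hI'.mem_zero_iff hn]
    refine and_congr_right fun hr => and_congr (hmem r hr) (forall₂_congr fun t ht => ?_)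
    exact not_congr (key t (by simp only [mem_Icc, mem_Ioc] at hr ht ⊢; omega) r)
  have hle : ∀ i ≤ n, I i = I' i := by
    intro i
    induction i with
    | zero => exact fun _ => hzero
    | succ i ih =>
      intro hin
      have hi : i + 1 ∈ Icc 1 n := by simp only [mem_Icc]; omega
      ext r
      rcases eq_or_ne r (i + 1) with rfl | hr
      · exact hmem _ hi
      · rw [hI.mem_iff_of_ne hi hr, hI'.mem_iff_of_ne hi hr, key _ hi r, add_tsub_cancel_right,
          ih (by omega)]
  funext i
  rw [← Periodic.map_mod_nat hI.1, ← Periodic.map_mod_nat hI'.1]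
  exact hle _ (Nat.mod_lt i hn).le

end IsSourceGN

structure IsBoundedAffine (n : ℕ) (f : ℤ → ℤ) : Prop where
  bijective : Bijective f
  map_add : ∀ x, f (x + n) = f x + n
  le_map : ∀ x, x ≤ f x
  map_le : ∀ x, f x ≤ x + n

theorem IsBoundedAffinePerm.isBoundedAffine {n k : ℕ} {f : ℤ → ℤ}
    (hf : IsBoundedAffinePerm n k f) : IsBoundedAffine n f :=
  ⟨hf.1, hf.2.1, fun x => (hf.2.2.1 x).1, fun x => (hf.2.2.1 x).2⟩

def necklaceOf (n : ℕ) (f : ℤ → ℤ) (i : ℕ) : Finset ℕ :=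
  (Icc 1 n).filter fun r => (i : ℤ) < f (reprIoc n i r)

theorem mem_necklaceOf_sub_one_iff {n : ℕ} {f : ℤ → ℤ} (hn : 0 < n) {i r : ℕ}
    (hi : i ∈ Icc 1 n) (hr : r ∈ Icc 1 n) (hri : r ≠ i) :
    r ∈ necklaceOf n f (i - 1) ↔ (i : ℤ) - 1 < f (reprIoc n i r) := by
  have hmod : ¬ (r : ℤ) ≡ i [ZMOD n] := fun h => hri (eq_of_modEq_of_mem_Icc hr hi h)
  have hcast : ((i - 1 : ℕ) : ℤ) = i - 1 := by simp only [mem_Icc] at hi; omega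
  simp only [necklaceOf, mem_filter, hr, true_and, hcast, reprIoc_sub_one hn hmod]

namespace IsBoundedAffine

variable {n k : ℕ} {f : ℤ → ℤ} (hf : IsBoundedAffine n f)
include hf

theorem modEq_of_map_modEq {a b : ℤ} (h : f a ≡ f b [ZMOD n]) : a ≡ b [ZMOD n] :=
  _root_.modEq_of_map_modEq hf.map_add hf.bijective.1 h

theorem map_sub_self_eq_of_modEq {a b : ℤ} (h : a ≡ b [ZMOD n]) : f b - b = f a - a :=
  _root_.map_sub_self_eq_of_modEq hf.map_add h

theorem map_sub_n (x : ℤ) : f (x - n) = f x - n := by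
  have := hf.map_add (x - n)
  rw [sub_add_cancel] at this
  omega

theorem necklaceOf_add (i : ℕ) : necklaceOf n f (i + n) = necklaceOf n f i := by
  ext r
  simp only [necklaceOf, mem_filter, Nat.cast_add, reprIoc_add_right, hf.map_add,
    add_lt_add_iff_right]

theorem self_mem_necklaceOf_iff {i : ℕ} (hi : i ∈ Icc 1 n) :
    i ∈ necklaceOf n f i ↔ f i ≠ i := by
  have : reprIoc n i i = i := by simp [reprIoc]
  simp only [necklaceOf, mem_filter, hi, true_and, this]
  exact ⟨ne_of_gt, fun h => lt_of_le_of_ne (hf.le_map i) (Ne.symm h)⟩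

/-- The window `Ioc (x - n) x` is permuted by `t ↦ reprIoc n x (f t)`, which differs from `f t`
by `n` exactly when `x < f t`. -/
theorem mul_card_filter_lt (hn : 0 < n) (x : ℤ) :
    (n : ℤ) * ((Ioc (x - n) x).filter fun t => x < f t).card =
      ∑ t ∈ Ioc (x - n) x, (f t - t) := by
  set W := Ioc (x - n) x
  have hmaps : ∀ t ∈ W, reprIoc n x (f t) ∈ W := fun t _ => reprIoc_mem_Ioc hn x (f t)
  have hinj : Set.InjOn (fun t => reprIoc n x (f t)) W := fun a ha b hb hab => by
    have hmod : f a ≡ f b [ZMOD n] := by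
      have h := reprIoc_modEq (n := n) x (f a)
      rw [show reprIoc n x (f a) = reprIoc n x (f b) from hab] at h
      exact h.symm.trans (reprIoc_modEq x (f b))
    exact (hf.modEq_of_map_modEq hmod).eq_of_mem_Ioc ha hb
  have hperm : ∑ t ∈ W, reprIoc n x (f t) = ∑ t ∈ W, t :=
    sum_nbij _ hmaps hinj (surjOn_of_injOn_of_card_le _ hmaps hinj le_rfl) (fun _ _ => rfl)
  have hgap : ∀ t ∈ W, f t - reprIoc n x (f t) = if x < f t then (n : ℤ) else 0 := by
    intro t ht
    have h1 := hf.le_map t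
    have h2 := hf.map_le t
    simp only [W, mem_Ioc] at ht
    split_ifs with hlt
    · have := eq_reprIoc (n := n) (x := x) (y := f t) (z := f t - n)
        (by simp only [mem_Ioc]; omega) (by simp [Int.modEq_iff_dvd])
      omega
    · have := eq_reprIoc (n := n) (x := x) (y := f t) (z := f t)
        (by simp only [mem_Ioc]; omega) rfl
      omega
  calc (n : ℤ) * (W.filter fun t => x < f t).card
      = ∑ t ∈ W, (f t - reprIoc n x (f t)) := by
        rw [sum_congr rfl hgap, sum_ite, sum_const_zero, sum_const, add_zero, nsmul_eq_mul,
          mul_comm]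
    _ = ∑ t ∈ W, (f t - t) := by rw [sum_sub_distrib, sum_sub_distrib, hperm]

theorem sum_Ioc_sub_self (hn : 0 < n) (x : ℤ) :
    ∑ t ∈ Ioc (x - n) x, (f t - t) = ∑ r ∈ Icc 1 n, (f r - r) := by
  rw [← sum_comp_reprIoc hn x (fun t => f t - t)]
  exact sum_congr rfl fun r _ => (hf.map_sub_self_eq_of_modEq (reprIoc_modEq x r)).symm

theorem mul_card_necklaceOf (hn : 0 < n) (i : ℕ) :
    (n : ℤ) * (necklaceOf n f i).card = ∑ j ∈ Icc (1 : ℤ) n, (f j - j) := by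
  have hcard : (necklaceOf n f i).card =
      ((Ioc ((i : ℤ) - n) i).filter fun t => (i : ℤ) < f t).card := by
    rw [necklaceOf, card_filter, card_filter,
      sum_comp_reprIoc hn i fun t => if (i : ℤ) < f t then 1 else 0]
  have hIcc : Icc (1 : ℤ) n = Ioc ((n : ℤ) - n) n := by ext; simp only [mem_Icc, mem_Ioc]; omega
  rw [hcard, hf.mul_card_filter_lt hn, hIcc, hf.sum_Ioc_sub_self hn, hf.sum_Ioc_sub_self hn]

theorem self_mem_necklaceOf_sub_one_iff (hn : 0 < n) {i : ℕ} (hi : i ∈ Icc 1 n) :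
    i ∈ necklaceOf n f (i - 1) ↔ f i = i + n := by
  have hcast : ((i - 1 : ℕ) : ℤ) = i - 1 := by simp only [mem_Icc] at hi; omega
  simp only [necklaceOf, mem_filter, hi, true_and, hcast, reprIoc_sub_one_self hn, hf.map_sub_n]
  have := hf.map_le i
  omega

theorem necklaceOf_sub_one_of_map_eq (hn : 0 < n) {i : ℕ} (hi : i ∈ Icc 1 n) (hfi : f i = i) :
    necklaceOf n f (i - 1) = necklaceOf n f i := by
  ext r
  by_cases hr : r ∈ Icc 1 n
  · by_cases hri : r = i
    · subst r
      rw [hf.self_mem_necklaceOf_sub_one_iff hn hi, hf.self_mem_necklaceOf_iff hi]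
      omega
    · rw [mem_necklaceOf_sub_one_iff hn hi hr hri, necklaceOf, mem_filter]
      have : f (reprIoc n i r) ≠ i := fun h =>
        hri (eq_of_modEq_of_mem_Icc hr hi ((reprIoc_modEq i r).symm.trans
          (by rw [hf.bijective.1 (h.trans hfi.symm)])))
      simp only [hr, true_and]
      omega
  · simp [necklaceOf, hr]

theorem necklaceOf_sub_one_of_map_ne (hn : 0 < n) {i : ℕ} (hi : i ∈ Icc 1 n) (hfi : f i ≠ i)
    {j : ℤ} (hj : f j = i) :
    necklaceOf n f (i - 1) = insert (residue n j) (necklaceOf n f i \ {i}) := by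
  have hji : j ≠ i := fun h => hfi (h ▸ hj)
  have hjW : j ∈ Ioc ((i : ℤ) - 1 - n) (i - 1) := by
    have := hf.le_map j
    have := hf.map_le j
    simp only [mem_Ioc]
    omega
  ext r
  by_cases hr : r ∈ Icc 1 n
  · rw [mem_insert, mem_sdiff, mem_singleton]
    by_cases hri : r = i
    · subst r
      have key : f i = i + n ↔ j = i - n := by
        rw [← hf.bijective.1.eq_iff (a := j), hj, hf.map_sub_n]
        omega
      have hres : i = residue n j ↔ j = i - n := by
        constructor
        · intro h
          refine Int.ModEq.eq_of_mem_Ioc hjW (by simp only [mem_Ioc]; omega)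
            ((residue_modEq hn j).symm.trans ?_)
          rw [← h]
          simp [Int.modEq_iff_dvd]
        · rintro rfl
          exact (residue_eq_of_modEq hi (by simp [Int.modEq_iff_dvd])).symm
      rw [hf.self_mem_necklaceOf_sub_one_iff hn hi, key, ← hres]
      simp
    · have hb := reprIoc_mem_Ioc hn i r
      have hbr := reprIoc_modEq (n := n) i r
      have hbi : reprIoc n i r ≠ i := fun h =>
        hri (eq_of_modEq_of_mem_Icc hr hi (hbr.symm.trans (by rw [h])))
      have key : reprIoc n i r = j ↔ r = residue n j := by
        constructor
        · intro h
          rw [← h]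
          exact (residue_eq_of_modEq hr hbr.symm).symm
        · rintro rfl
          simp only [mem_Ioc] at hb
          exact Int.ModEq.eq_of_mem_Ioc (by simp only [mem_Ioc]; omega) hjW
            (hbr.trans (residue_modEq hn j))
      rw [mem_necklaceOf_sub_one_iff hn hi hr hri, necklaceOf, mem_filter, ← key,
        ← hf.bijective.1.eq_iff, hj]
      simp only [hr, true_and, hri, not_false_eq_true, and_true]
      omega
  · have := residue_mem hn j
    simp only [necklaceOf, mem_insert, mem_sdiff, mem_filter, hr, false_and, or_false]
    exact ⟨False.elim, fun h => hr (h ▸ this)⟩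

theorem isSourceGN_necklaceOf (hn : 0 < n) (hk : ∑ j ∈ Icc (1 : ℤ) n, (f j - j) = n * k) :
    IsSourceGN n k (necklaceOf n f) := by
  refine ⟨hf.necklaceOf_add, fun r _ => ⟨?_, filter_subset _ _⟩,
    fun i hi => ⟨fun hmem => ?_, fun hmem => ?_⟩⟩
  · have := hf.mul_card_necklaceOf hn r
    rw [hk] at this
    exact_mod_cast mul_left_cancel₀ (by positivity) this
  · obtain ⟨j, hj⟩ := hf.bijective.2 i
    exact ⟨residue n j, residue_mem hn j,
      hf.necklaceOf_sub_one_of_map_ne hn hi ((hf.self_mem_necklaceOf_iff hi).mp hmem) hj⟩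
  · exact hf.necklaceOf_sub_one_of_map_eq hn hi
      (not_not.mp (mt (hf.self_mem_necklaceOf_iff hi).mpr hmem))

theorem exchange_necklaceOf (hn : 0 < n) {i : ℕ} (hi : i ∈ Icc 1 n) (hfi : f i ≠ i) {j : ℤ}
    (hj : f j = i) : exchange (necklaceOf n f) i = residue n j :=
  (hf.isSourceGN_necklaceOf hn (hf.mul_card_necklaceOf hn n).symm).exchange_eq hi
    ((hf.self_mem_necklaceOf_iff hi).mpr hfi)
    (hf.necklaceOf_sub_one_of_map_ne hn hi hfi hj)

end IsBoundedAffine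

noncomputable def affinePermInv (n : ℕ) (I : ℕ → Finset ℕ) (x : ℤ) : ℤ :=
  if residue n x ∈ I (residue n x) then reprIoc n (x - 1) (exchange I (residue n x)) else x

noncomputable def affinePerm (n : ℕ) (I : ℕ → Finset ℕ) : ℤ → ℤ :=
  invFun (affinePermInv n I)

section AffinePermInv

variable {n k : ℕ} {I : ℕ → Finset ℕ}

theorem affinePermInv_add (x : ℤ) : affinePermInv n I (x + n) = affinePermInv n I x + n := by
  simp only [affinePermInv, residue_add_self, add_sub_right_comm x, reprIoc_add_right]
  split_ifs <;> rfl

theorem affinePermInv_mem_Icc (hn : 0 < n) (x : ℤ) : affinePermInv n I x ∈ Icc (x - n) x := by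
  unfold affinePermInv
  split_ifs
  · have := reprIoc_mem_Ioc hn (x - 1) (exchange I (residue n x))
    simp only [mem_Ioc, mem_Icc] at this ⊢
    omega
  · simp only [mem_Icc]
    omega

theorem affinePermInv_eq_self_iff (hn : 0 < n) {i : ℕ} (hi : i ∈ Icc 1 n) :
    affinePermInv n I i = i ↔ i ∉ I i := by
  unfold affinePermInv
  rw [residue_natCast hi]
  split_ifs with hmem
  · have := reprIoc_mem_Ioc hn ((i : ℤ) - 1) (exchange I i)
    simp only [mem_Ioc] at this
    simp only [hmem, not_true_eq_false, iff_false]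
    omega
  · simp [hmem]

theorem IsSourceGN.residue_affinePermInv (hI : IsSourceGN n k I) (hn : 0 < n) (x : ℤ) :
    residue n (affinePermInv n I x) =
      if residue n x ∈ I (residue n x) then exchange I (residue n x) else residue n x := by
  unfold affinePermInv
  split_ifs with hmem
  · exact residue_eq_of_modEq (hI.exchange_mem_Icc (residue_mem hn x) hmem)
      (reprIoc_modEq _ _).symm
  · rfl

theorem IsSourceGN.bijective_affinePermInv (hI : IsSourceGN n k I) (hn : 0 < n) :
    Bijective (affinePermInv n I) := by
  refine bijective_of_map_add hn affinePermInv_add fun a b hab => ?_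
  rw [← residue_eq_residue_iff hn, hI.residue_affinePermInv hn, hI.residue_affinePermInv hn] at hab
  rw [← residue_eq_residue_iff hn]
  have ha := residue_mem hn a
  have hb := residue_mem hn b
  split_ifs at hab with hma hmb hmb
  · exact hI.eq_of_exchange_eq ha hb hma hmb hab
  · exact absurd (hab ▸ hI.exchange_mem_self ha hma) hmb
  · exact absurd (hab ▸ hI.exchange_mem_self hb hmb) hma
  · exact hab

theorem IsSourceGN.affinePerm_affinePermInv (hI : IsSourceGN n k I) (hn : 0 < n) :
    LeftInverse (affinePerm n I) (affinePermInv n I) :=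
  leftInverse_invFun (hI.bijective_affinePermInv hn).1

theorem IsSourceGN.affinePermInv_affinePerm (hI : IsSourceGN n k I) (hn : 0 < n) :
    RightInverse (affinePerm n I) (affinePermInv n I) :=
  rightInverse_invFun (hI.bijective_affinePermInv hn).2

theorem IsSourceGN.isBoundedAffine_affinePerm (hI : IsSourceGN n k I) (hn : 0 < n) :
    IsBoundedAffine n (affinePerm n I) := by
  have hleft := hI.affinePerm_affinePermInv hn
  have hright := hI.affinePermInv_affinePerm hn
  have hbound : ∀ x, affinePerm n I x - n ≤ x ∧ x ≤ affinePerm n I x := fun x => by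
    have := affinePermInv_mem_Icc (I := I) hn (affinePerm n I x)
    rw [hright x, mem_Icc] at this
    exact this
  refine ⟨⟨hright.injective, hleft.surjective⟩, fun x => hleft.injective ?_, fun x => (hbound x).2,
    fun x => by linarith [(hbound x).1]⟩
  rw [affinePermInv_add, hright, hright]

theorem IsSourceGN.necklaceOf_affinePerm (hI : IsSourceGN n k I) (hn : 0 < n) :
    necklaceOf n (affinePerm n I) = I := by
  have hf := hI.isBoundedAffine_affinePerm hn
  have hleft := hI.affinePerm_affinePermInv hn
  have hright := hI.affinePermInv_affinePerm hn
  have hmap_eq : ∀ i ∈ Icc 1 n, affinePerm n I i = i ↔ i ∉ I i := fun i hi => by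
    rw [← affinePermInv_eq_self_iff hn hi]
    exact ⟨fun h => (congrArg _ h).symm.trans (hright i),
      fun h => (congrArg _ h).symm.trans (hleft i)⟩
  have hk := hf.mul_card_necklaceOf hn n
  refine ((hf.isSourceGN_necklaceOf hn hk.symm).ext hI hn (fun i hi => ?_) fun i hi hmem => ?_)
  · rw [hf.self_mem_necklaceOf_iff hi, Ne, hmap_eq i hi, not_not]
  · have hfi := (hf.self_mem_necklaceOf_iff hi).mp hmem
    rw [hf.exchange_necklaceOf hn hi hfi (hleft i), hI.residue_affinePermInv hn,
      residue_natCast hi, if_pos (not_not.mp (mt (hmap_eq i hi).mpr hfi))]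

theorem IsSourceGN.isBoundedAffinePerm_affinePerm (hI : IsSourceGN n k I) (hn : 0 < n) :
    IsBoundedAffinePerm n k (affinePerm n I) := by
  have hf := hI.isBoundedAffine_affinePerm hn
  refine ⟨hf.bijective, hf.map_add, fun x => ⟨hf.le_map x, hf.map_le x⟩, ?_⟩
  rw [← hf.mul_card_necklaceOf hn n, hI.necklaceOf_affinePerm hn,
    (hI.2.1 n (by simp only [mem_Icc]; omega)).1]

end AffinePermInv

theorem IsBoundedAffine.affinePerm_necklaceOf {n : ℕ} {f : ℤ → ℤ} (hb : IsBoundedAffine n f)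
    (hn : 0 < n) : affinePerm n (necklaceOf n f) = f := by
  have hN := hb.isSourceGN_necklaceOf hn (hb.mul_card_necklaceOf hn n).symm
  have hinv : ∀ x y, f y = x → affinePermInv n (necklaceOf n f) x = y := by
    intro x y hxy
    have hr := residue_mem hn x
    have hfr : f x - x = f (residue n x) - residue n x :=
      hb.map_sub_self_eq_of_modEq (residue_modEq hn x)
    unfold affinePermInv
    by_cases hx : f x = x
    · rw [if_neg (by rw [hb.self_mem_necklaceOf_iff hr, not_not]; omega)]
      exact hb.bijective.1 (hx.trans hxy.symm)
    · have hyx : y ≠ x := by rintro rfl; exact hx hxy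
      obtain ⟨j, hj⟩ := hb.bijective.2 (residue n x)
      rw [if_pos (by rw [hb.self_mem_necklaceOf_iff hr]; omega),
        hb.exchange_necklaceOf hn hr (by omega) hj]
      refine (eq_reprIoc ?_ ?_).symm
      · have := hb.le_map y
        have := hb.map_le y
        simp only [mem_Ioc]
        omega
      · exact (hb.modEq_of_map_modEq (hxy ▸ hj ▸ (residue_modEq hn x).symm)).trans
          (residue_modEq hn j).symm
  funext x
  exact (hN.bijective_affinePermInv hn).1
    ((hN.affinePermInv_affinePerm hn x).trans (hinv _ x rfl).symm)

theorem stmt0_general (n k : ℕ) (hn : 0 < n) :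
    Nonempty ({I : ℕ → Finset ℕ // IsSourceGN n k I} ≃
      {f : ℤ → ℤ // IsBoundedAffinePerm n k f}) :=
  ⟨{ toFun := fun I => ⟨affinePerm n I, I.2.isBoundedAffinePerm_affinePerm hn⟩
     invFun := fun f => ⟨necklaceOf n f, f.2.isBoundedAffine.isSourceGN_necklaceOf hn f.2.2.2.2⟩
     left_inv := fun I => Subtype.ext (I.2.necklaceOf_affinePerm hn)
     right_inv := fun f => Subtype.ext (f.2.isBoundedAffine.affinePerm_necklaceOf hn) }⟩

theorem stmt0 (n k : ℕ) (hn : 0 < n) (hk : 0 < k) (hkn : k < n) :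
    Nonempty ({I : ℕ → Finset ℕ // IsSourceGN n k I} ≃
      {f : ℤ → ℤ // IsBoundedAffinePerm n k f}) :=
  stmt0_general n k hn
end

section
/- Let μ ⊆ λ be partitions fitting in the k×(n−k) rectangle and set w_{λ/μ} := w_μ ∘ w_λ^{-1} ∈ S_n. Then w_μ = w_{λ/μ} ∘ w_λ is a length-additive factorization, i.e. ℓ(w_μ) = ℓ(w_{λ/μ}) + ℓ(w_λ). -/
/-- The height `λ̄_a` of the `a`-th column (counted from the right) of the
partition `f = (f 1 ≥ ⋯ ≥ f k)` inside the `k × (n-k)` rectangle. -/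
def colHeight (n k : ℕ) (f : ℕ → ℕ) (a : ℕ) : ℕ :=
  ((Finset.Icc 1 k).filter (fun i => n - k - a + 1 ≤ f i)).card

/-- The number of inversions of `σ` on `{1, …, n}`. -/
def invCount (n : ℕ) (σ : Equiv.Perm ℕ) : ℕ :=
  (((Finset.Icc 1 n) ×ˢ (Finset.Icc 1 n)).filter
    (fun p => p.1 < p.2 ∧ σ p.2 < σ p.1)).card

/-!
Every inversion of `w_λ` pairs a position `i ≤ k` with a position `k < j`, and shrinking `λ` to
`μ` lowers `w(j)` and raises `w(i)`, so the inversion set of `w_λ` is contained in that of `w_μ`.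
For permutations `τ, σ` with `Inv(τ) ⊆ Inv(σ)`, relabelling by `τ` identifies `Inv(σ) \ Inv(τ)`
with `Inv(σ τ⁻¹)`, which gives `ℓ(σ) = ℓ(σ τ⁻¹) + ℓ(τ)`.
-/

open Finset

def inversionPairs (n : ℕ) (σ : Equiv.Perm ℕ) : Finset (ℕ × ℕ) :=
  ((Icc 1 n) ×ˢ (Icc 1 n)).filter (fun p => p.1 < p.2 ∧ σ p.2 < σ p.1)

theorem invCount_eq_card_inversionPairs (n : ℕ) (σ : Equiv.Perm ℕ) :
    invCount n σ = (inversionPairs n σ).card :=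
  rfl

theorem mem_inversionPairs {n : ℕ} {σ : Equiv.Perm ℕ} {p : ℕ × ℕ} :
    p ∈ inversionPairs n σ ↔
      (p.1 ∈ Icc 1 n ∧ p.2 ∈ Icc 1 n) ∧ p.1 < p.2 ∧ σ p.2 < σ p.1 := by
  simp only [inversionPairs, mem_filter, mem_product]

section InversionSubset

variable {n : ℕ} {σ τ : Equiv.Perm ℕ}

theorem card_inversionPairs_sdiff (hτ : Set.MapsTo τ (Icc 1 n : Set ℕ) (Icc 1 n))
    (hsub : inversionPairs n τ ⊆ inversionPairs n σ) :
    (inversionPairs n σ \ inversionPairs n τ).card = invCount n (σ * τ⁻¹) := by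
  have hτinv : Set.MapsTo ⇑τ⁻¹ (Icc 1 n : Set ℕ) (Icc 1 n) :=
    ((finite_toSet _).injOn_iff_bijOn_of_mapsTo hτ |>.1 τ.injective.injOn).perm_inv.mapsTo
  rw [invCount_eq_card_inversionPairs]
  refine card_nbij' (fun p => (τ p.1, τ p.2)) (fun q => (τ⁻¹ q.1, τ⁻¹ q.2)) ?_ ?_ ?_ ?_
  · rintro ⟨i, j⟩ hp
    rw [mem_coe, mem_sdiff, mem_inversionPairs, mem_inversionPairs] at hp
    obtain ⟨⟨⟨hi, hj⟩, hij, hσ⟩, hτij⟩ := hp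
    have hτji : ¬τ j < τ i := fun h => hτij ⟨⟨hi, hj⟩, hij, h⟩
    rw [mem_coe, mem_inversionPairs]
    refine ⟨⟨hτ hi, hτ hj⟩, (τ.injective.ne hij.ne).lt_or_gt.resolve_right hτji, ?_⟩
    simpa only [Equiv.Perm.mul_apply, Equiv.Perm.coe_inv, Equiv.symm_apply_apply] using hσ
  · rintro ⟨a, b⟩ hq
    rw [mem_coe, mem_inversionPairs] at hq
    obtain ⟨⟨ha, hb⟩, hab, hσ⟩ := hq
    -- `(τ⁻¹ b, τ⁻¹ a)` cannot be an inversion of `τ`, since it is none of `σ`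
    have hij : τ⁻¹ a < τ⁻¹ b := by
      refine (τ⁻¹.injective.ne hab.ne).lt_or_gt.resolve_right fun hji => ?_
      have hτji : (τ⁻¹ b, τ⁻¹ a) ∈ inversionPairs n τ :=
        mem_inversionPairs.2 ⟨⟨hτinv hb, hτinv ha⟩, hji, by simpa using hab⟩
      exact (mem_inversionPairs.1 (hsub hτji)).2.2.asymm hσ
    rw [mem_coe, mem_sdiff, mem_inversionPairs, mem_inversionPairs]
    simp only [Equiv.Perm.coe_inv, Equiv.apply_symm_apply]
    exact ⟨⟨⟨hτinv ha, hτinv hb⟩, hij, hσ⟩, fun h => (h.2.2.trans hab).false⟩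
  · intro p _
    simp
  · intro q _
    simp

theorem invCount_eq_invCount_mul_inv_add (hτ : Set.MapsTo τ (Icc 1 n : Set ℕ) (Icc 1 n))
    (hsub : inversionPairs n τ ⊆ inversionPairs n σ) :
    invCount n σ = invCount n (σ * τ⁻¹) + invCount n τ := by
  rw [← card_inversionPairs_sdiff hτ hsub, invCount_eq_card_inversionPairs,
    invCount_eq_card_inversionPairs, card_sdiff_add_card_eq_card hsub]

end InversionSubset

section Grassmannian

variable {n k : ℕ} {f g : ℕ → ℕ} {v w : Equiv.Perm ℕ}

theorem colHeight_le (n k : ℕ) (f : ℕ → ℕ) (a : ℕ) : colHeight n k f a ≤ k :=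
  (card_filter_le _ _).trans_eq (Nat.card_Icc 1 k)

theorem colHeight_mono (n k : ℕ) (f : ℕ → ℕ) : Monotone (colHeight n k f) :=
  fun a b hab => card_le_card <| monotone_filter_right _ fun i _ hi =>
    (show n - k - b + 1 ≤ n - k - a + 1 by omega).trans hi

theorem colHeight_le_colHeight (n : ℕ) (hgf : ∀ i, 1 ≤ i → i ≤ k → g i ≤ f i) (a : ℕ) :
    colHeight n k g a ≤ colHeight n k f a := by
  refine card_le_card fun i hi => ?_
  simp only [mem_filter, mem_Icc] at hi ⊢
  exact ⟨hi.1, hi.2.trans (hgf i hi.1.1 hi.1.2)⟩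

/-- `w` agrees with the Grassmannian permutation `w_f` of the partition `f` on `{1, …, n}`. -/
def IsGrassmannianPerm (n k : ℕ) (f : ℕ → ℕ) (w : Equiv.Perm ℕ) : Prop :=
  (∀ i, 1 ≤ i → i ≤ k → w i = n - k - f i + i) ∧
    ∀ a, 1 ≤ a → a ≤ n - k → w (k + a) = a + colHeight n k f a

namespace IsGrassmannianPerm

theorem apply_of_lt (hw : IsGrassmannianPerm n k f w) {x : ℕ} (hkx : k < x) (hxn : x ≤ n) :
    w x = x - k + colHeight n k f (x - k) := by
  have := hw.2 (x - k) (by omega) (by omega)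
  rwa [Nat.add_sub_cancel' hkx.le] at this

theorem mapsTo (hw : IsGrassmannianPerm n k f w) (hf : ∀ i, 1 ≤ i → i ≤ k → f i ≤ n - k) :
    Set.MapsTo w (Icc 1 n : Set ℕ) (Icc 1 n) := by
  intro x hx
  rw [mem_coe, mem_Icc] at hx ⊢
  rcases le_or_gt x k with hxk | hkx
  · have := hf x hx.1 hxk
    rw [hw.1 x hx.1 hxk]
    omega
  · have := colHeight_le n k f (x - k)
    rw [hw.apply_of_lt hkx hx.2]
    omega

theorem fst_le_lt_snd_of_mem_inversionPairs (hw : IsGrassmannianPerm n k f w)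
    (hf : ∀ i, 1 ≤ i → i ≤ k → f i ≤ n - k)
    (hanti : ∀ i j, 1 ≤ i → i ≤ j → j ≤ k → f j ≤ f i) {p : ℕ × ℕ}
    (hp : p ∈ inversionPairs n w) : p.1 ≤ k ∧ k < p.2 := by
  obtain ⟨⟨hi, hj⟩, hij, hinv⟩ := mem_inversionPairs.1 hp
  rw [mem_Icc] at hi hj
  constructor
  · by_contra! hki
    have := colHeight_mono n k f (Nat.sub_le_sub_right hij.le k)
    rw [hw.apply_of_lt hki hi.2, hw.apply_of_lt (hki.trans hij) hj.2] at hinv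
    omega
  · by_contra! hjk
    have := hanti p.1 p.2 hi.1 hij.le hjk
    have := hf p.1 hi.1 (hij.le.trans hjk)
    rw [hw.1 p.1 hi.1 (hij.le.trans hjk), hw.1 p.2 hj.1 hjk] at hinv
    omega

theorem inversionPairs_subset (hw : IsGrassmannianPerm n k f w)
    (hv : IsGrassmannianPerm n k g v) (hf : ∀ i, 1 ≤ i → i ≤ k → f i ≤ n - k)
    (hanti : ∀ i j, 1 ≤ i → i ≤ j → j ≤ k → f j ≤ f i)
    (hgf : ∀ i, 1 ≤ i → i ≤ k → g i ≤ f i) :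
    inversionPairs n w ⊆ inversionPairs n v := by
  intro p hp
  obtain ⟨hik, hkj⟩ := hw.fst_le_lt_snd_of_mem_inversionPairs hf hanti hp
  obtain ⟨⟨hi, hj⟩, hij, hinv⟩ := mem_inversionPairs.1 hp
  refine mem_inversionPairs.2 ⟨⟨hi, hj⟩, hij, ?_⟩
  rw [mem_Icc] at hi hj
  have := hgf p.1 hi.1 hik
  have := hf p.1 hi.1 hik
  have := colHeight_le_colHeight n hgf (p.2 - k)
  rw [hw.1 p.1 hi.1 hik, hw.apply_of_lt hkj hj.2] at hinv
  rw [hv.1 p.1 hi.1 hik, hv.apply_of_lt hkj hj.2]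
  omega

end IsGrassmannianPerm

end Grassmannian

theorem stmt1_general (n k : ℕ) (l m : ℕ → ℕ)
    (hlmono : ∀ i j, 1 ≤ i → i ≤ j → j ≤ k → l j ≤ l i)
    (hl1 : l 1 ≤ n - k)
    (hml : ∀ i, 1 ≤ i → i ≤ k → m i ≤ l i)
    (wl wm : Equiv.Perm ℕ)
    (hwl1 : ∀ i, 1 ≤ i → i ≤ k → wl i = n - k - l i + i)
    (hwl2 : ∀ a, 1 ≤ a → a ≤ n - k → wl (k + a) = a + colHeight n k l a)
    (hwm1 : ∀ i, 1 ≤ i → i ≤ k → wm i = n - k - m i + i)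
    (hwm2 : ∀ a, 1 ≤ a → a ≤ n - k → wm (k + a) = a + colHeight n k m a) :
    invCount n wm = invCount n (wm * wl⁻¹) + invCount n wl := by
  have hl : ∀ i, 1 ≤ i → i ≤ k → l i ≤ n - k := fun i hi hik =>
    (hlmono 1 i le_rfl hi hik).trans hl1
  have hwl : IsGrassmannianPerm n k l wl := ⟨hwl1, hwl2⟩
  exact invCount_eq_invCount_mul_inv_add (hwl.mapsTo hl)
    (hwl.inversionPairs_subset ⟨hwm1, hwm2⟩ hl hlmono hml)

theorem stmt1 (n k : ℕ) (hk : 0 < k) (hkn : k < n) (l m : ℕ → ℕ)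
    (hlmono : ∀ i j, 1 ≤ i → i ≤ j → j ≤ k → l j ≤ l i)
    (hl1 : l 1 ≤ n - k)
    (hmmono : ∀ i j, 1 ≤ i → i ≤ j → j ≤ k → m j ≤ m i)
    (hml : ∀ i, 1 ≤ i → i ≤ k → m i ≤ l i)
    (wl wm : Equiv.Perm ℕ)
    (hwl1 : ∀ i, 1 ≤ i → i ≤ k → wl i = n - k - l i + i)
    (hwl2 : ∀ a, 1 ≤ a → a ≤ n - k → wl (k + a) = a + colHeight n k l a)
    (hwm1 : ∀ i, 1 ≤ i → i ≤ k → wm i = n - k - m i + i)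
    (hwm2 : ∀ a, 1 ≤ a → a ≤ n - k → wm (k + a) = a + colHeight n k m a) :
    invCount n wm = invCount n (wm * wl⁻¹) + invCount n wl :=
  stmt1_general n k l m hlmono hl1 hml wl wm hwl1 hwl2 hwm1 hwm2
end

section
/- Assume the boxes (a,i) and (a+1,i) both belong to the skew diagram λ/μ (i.e. μ̄_{a+1} < i ≤ λ̄_a and i ≤ λ̄_{a+1}, where 1 ≤ a ≤ n−k−1). Then J(a+1,i) is obtained from J(a,i) by swapping a+μ̄_a for a+i, that is, J(a+1,i) = (J(a,i) ∖ {a+μ̄_a}) ∪ {a+i}. -/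
/-- `b_i = n - k - μ_i + i`. -/
def bvec (n k : ℕ) (m : ℕ → ℕ) (i : ℕ) : ℕ := n - k - m i + i

/-- The short label `J(a,i) = {min (a+j-1) (b_j) : j = 1, …, i}`. -/
def shortLabel (n k : ℕ) (m : ℕ → ℕ) (a i : ℕ) : Finset ℕ :=
  (Finset.Icc 1 i).image (fun j => min (a + j - 1) (bvec n k m j))

/-- The label `I'(a,i) = J(a,i) ∪ {b_{i+1}, …, b_k}`. -/
def fullLabel (n k : ℕ) (m : ℕ → ℕ) (a i : ℕ) : Finset ℕ :=
  shortLabel n k m a i ∪ (Finset.Icc (i + 1) k).image (bvec n k m)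

/-- `I_μ = {b_1, …, b_k}`. -/
def Imu (n k : ℕ) (m : ℕ → ℕ) : Finset ℕ := (Finset.Icc 1 k).image (bvec n k m)

/-- The box `(a,i)` belongs to the skew diagram `λ/μ`. -/
def InSkew (n k : ℕ) (l m : ℕ → ℕ) (a i : ℕ) : Prop :=
  1 ≤ a ∧ a ≤ n - k ∧ 1 ≤ i ∧ i ≤ k ∧ colHeight n k m a < i ∧ i ≤ colHeight n k l a

/-- The box `(a,i)` belongs to the boundary ribbon `R(λ/μ)`. -/
def InRibbon (n k : ℕ) (l m : ℕ → ℕ) (a i : ℕ) : Prop :=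
  InSkew n k l m a i ∧ (a = 1 ∨ colHeight n k l (a - 1) ≤ i)

theorem stmt2 (n k : ℕ) (l m : ℕ → ℕ)
    (hk : 0 < k) (hkn : k < n)
    (hlmono : ∀ i j, 1 ≤ i → i ≤ j → j ≤ k → l j ≤ l i)
    (hl1 : l 1 ≤ n - k)
    (hmmono : ∀ i j, 1 ≤ i → i ≤ j → j ≤ k → m j ≤ m i)
    (hml : ∀ i, 1 ≤ i → i ≤ k → m i ≤ l i)
    (a i : ℕ) (ha : a ≤ n - k - 1)
    (h1 : InSkew n k l m a i) (h2 : InSkew n k l m (a + 1) i) :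
    shortLabel n k m (a + 1) i =
      insert (a + i) (shortLabel n k m a i \ {a + colHeight n k m a}) := by
  have hi1 : 1 ≤ i := h1.2.2.1
  have hik : i ≤ k := h1.2.2.2.1
  have ha1 : 1 ≤ a := h1.1
  have hci : colHeight n k m a < i := h1.2.2.2.2.1
  have hank : a + 1 ≤ n - k := by omega
  have hmnk : ∀ j, 1 ≤ j → j ≤ k → m j ≤ n - k := fun j hj1 hjk =>
    le_trans (hml j hj1 hjk) (le_trans (hlmono 1 j le_rfl hj1 hjk) hl1)
  have C1 : ∀ j, 1 ≤ j → j ≤ k → j ≤ colHeight n k m a → n - k - a + 1 ≤ m j := by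
    intro j hj1 hjk hjc
    by_contra h
    push_neg at h
    have hsub : ((Finset.Icc 1 k).filter (fun i => n - k - a + 1 ≤ m i)) ⊆
        Finset.Icc 1 (j - 1) := by
      intro x hx
      simp only [Finset.mem_filter, Finset.mem_Icc] at hx ⊢
      refine ⟨hx.1.1, ?_⟩
      by_contra hxj
      push_neg at hxj
      have := hmmono j x hj1 (by omega) hx.1.2
      omega
    have hcard : colHeight n k m a ≤ j - 1 + 1 - 1 := by
      simpa [colHeight, Nat.card_Icc] using Finset.card_le_card hsub
    omega
  have C2 : ∀ j, 1 ≤ j → j ≤ k → colHeight n k m a < j → m j ≤ n - k - a := by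
    intro j hj1 hjk hjc
    by_contra h
    push_neg at h
    have hsub : Finset.Icc 1 j ⊆
        (Finset.Icc 1 k).filter (fun i => n - k - a + 1 ≤ m i) := by
      intro x hx
      simp only [Finset.mem_filter, Finset.mem_Icc] at hx ⊢
      exact ⟨⟨hx.1, le_trans hx.2 hjk⟩, le_trans (by omega) (hmmono x j hx.1 hx.2 hjk)⟩
    have hcard : j + 1 - 1 ≤ colHeight n k m a := by
      simpa [colHeight, Nat.card_Icc] using Finset.card_le_card hsub
    omega
  have F1 : ∀ j, 1 ≤ j → j ≤ k → j ≤ colHeight n k m a → bvec n k m j + 1 ≤ a + j := by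
    intro j hj1 hjk hjc
    have h1 := C1 j hj1 hjk hjc
    have h2 := hmnk j hj1 hjk
    simp only [bvec]
    omega
  have F2 : ∀ j, 1 ≤ j → j ≤ k → colHeight n k m a < j → a + j ≤ bvec n k m j := by
    intro j hj1 hjk hjc
    have h1 := C2 j hj1 hjk hjc
    have h2 := hmnk j hj1 hjk
    simp only [bvec]
    omega
  ext x
  simp only [shortLabel, Finset.mem_image, Finset.mem_Icc, Finset.mem_insert,
    Finset.mem_sdiff, Finset.mem_singleton]
  constructor
  · rintro ⟨j, ⟨hj1, hji⟩, rfl⟩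
    by_cases hjc : j ≤ colHeight n k m a
    · right
      have hb := F1 j hj1 (le_trans hji hik) hjc
      exact ⟨⟨j, ⟨hj1, hji⟩, by omega⟩, by omega⟩
    · push_neg at hjc
      have hb := F2 j hj1 (le_trans hji hik) hjc
      by_cases hji' : j = i
      · left; omega
      · right
        have hb2 := F2 (j + 1) (by omega) (by omega) (by omega)
        exact ⟨⟨j + 1, ⟨by omega, by omega⟩, by omega⟩, by omega⟩
  · rintro (rfl | ⟨⟨j, ⟨hj1, hji⟩, rfl⟩, hne⟩)
    · have hb := F2 i hi1 hik hci
      exact ⟨i, ⟨hi1, le_rfl⟩, by omega⟩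
    · by_cases hjc : j ≤ colHeight n k m a
      · have hb := F1 j hj1 (le_trans hji hik) hjc
        exact ⟨j, ⟨hj1, hji⟩, by omega⟩
      · push_neg at hjc
        have hb := F2 j hj1 (le_trans hji hik) hjc
        have hj2 : colHeight n k m a + 2 ≤ j := by omega
        have hb2 := F2 (j - 1) (by omega) (by omega) (by omega)
        exact ⟨j - 1, ⟨by omega, by omega⟩, by omega⟩
end

section
/- Assume the boxes (a,i) and (a,i+1) both belong to the skew diagram λ/μ (i.e. μ̄_a < i and i+1 ≤ λ̄_a). Then J(a,i+1) is obtained from J(a,i) by adding the element a+i, that is, J(a,i+1) = J(a,i) ∪ {a+i}. -/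
theorem stmt3 (n k : ℕ) (l m : ℕ → ℕ)
    (hk : 0 < k) (hkn : k < n)
    (hlmono : ∀ i j, 1 ≤ i → i ≤ j → j ≤ k → l j ≤ l i)
    (hl1 : l 1 ≤ n - k)
    (hmmono : ∀ i j, 1 ≤ i → i ≤ j → j ≤ k → m j ≤ m i)
    (hml : ∀ i, 1 ≤ i → i ≤ k → m i ≤ l i)
    (a i : ℕ)
    (h1 : InSkew n k l m a i) (h2 : InSkew n k l m a (i + 1)) :
    shortLabel n k m a (i + 1) = insert (a + i) (shortLabel n k m a i) := by

  obtain ⟨ha1, han, hi1, hik, hm2, hl2⟩ := h2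
  -- key: m (i+1) ≤ n - k - a
  have key : m (i + 1) ≤ n - k - a := by
    by_contra hcon
    push_neg at hcon
    have hsub : Finset.Icc 1 (i + 1) ⊆
        (Finset.Icc 1 k).filter (fun j => n - k - a + 1 ≤ m j) := by
      intro j hj
      simp only [Finset.mem_Icc] at hj
      simp only [Finset.mem_filter, Finset.mem_Icc]
      refine ⟨⟨hj.1, le_trans hj.2 hik⟩, ?_⟩
      have := hmmono j (i + 1) hj.1 hj.2 hik
      omega
    have := Finset.card_le_card hsub
    simp only [Nat.card_Icc] at this
    unfold colHeight at hm2
    omega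
  have hmin : min (a + (i + 1) - 1) (bvec n k m (i + 1)) = a + i := by
    unfold bvec
    omega
  have hIcc : Finset.Icc 1 (i + 1) = insert (i + 1) (Finset.Icc 1 i) := by
    ext j; simp [Finset.mem_Icc]; omega
  unfold shortLabel
  rw [hIcc, Finset.image_insert, hmin]
end

section
/- Suppose the box (a+1,i) belongs to μ (i.e. i ≤ μ̄_{a+1}) but the box (a,i) belongs to the skew diagram λ/μ (i.e. μ̄_a < i ≤ λ̄_a), where 1 ≤ a ≤ n−k−1. Then {b_1,…,b_i} is obtained from J(a,i) by swapping a+μ̄_a for a+i, that is, {b_1,…,b_i} = (J(a,i) ∖ {a+μ̄_a}) ∪ {a+i}. -/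
/-- Column membership criterion: since `m` is weakly decreasing, the filter
defining `colHeight` is an initial segment. -/
lemma colHeight_iff (n k : ℕ) (m : ℕ → ℕ)
    (hmmono : ∀ i j, 1 ≤ i → i ≤ j → j ≤ k → m j ≤ m i)
    (t j : ℕ) (hj1 : 1 ≤ j) (hjk : j ≤ k) :
    n - k - t + 1 ≤ m j ↔ j ≤ colHeight n k m t := by
  constructor
  · intro hP
    have hsub : Finset.Icc 1 j ⊆
        (Finset.Icc 1 k).filter (fun x => n - k - t + 1 ≤ m x) := by
      intro x hx
      simp only [Finset.mem_Icc] at hx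
      simp only [Finset.mem_filter, Finset.mem_Icc]
      exact ⟨⟨hx.1, hx.2.trans hjk⟩, le_trans hP (hmmono x j hx.1 hx.2 hjk)⟩
    have hcard := Finset.card_le_card hsub
    rw [Nat.card_Icc] at hcard
    unfold colHeight
    omega
  · intro hj
    by_contra hP
    have hsub : (Finset.Icc 1 k).filter (fun x => n - k - t + 1 ≤ m x) ⊆
        Finset.Icc 1 (j - 1) := by
      intro x hx
      simp only [Finset.mem_filter, Finset.mem_Icc] at hx
      simp only [Finset.mem_Icc]
      refine ⟨hx.1.1, ?_⟩
      by_contra hxj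
      push_neg at hxj
      exact hP (le_trans hx.2 (hmmono j x hj1 (by omega) hx.1.2))
    have hcard := Finset.card_le_card hsub
    rw [Nat.card_Icc] at hcard
    unfold colHeight at hj
    omega

theorem stmt5 (n k : ℕ) (l m : ℕ → ℕ)
    (hk : 0 < k) (hkn : k < n)
    (hlmono : ∀ i j, 1 ≤ i → i ≤ j → j ≤ k → l j ≤ l i)
    (hl1 : l 1 ≤ n - k)
    (hmmono : ∀ i j, 1 ≤ i → i ≤ j → j ≤ k → m j ≤ m i)
    (hml : ∀ i, 1 ≤ i → i ≤ k → m i ≤ l i)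
    (a i : ℕ) (ha : a ≤ n - k - 1)
    (hmu : i ≤ colHeight n k m (a + 1))
    (h1 : InSkew n k l m a i) :
    (Finset.Icc 1 i).image (bvec n k m) =
      insert (a + i) (shortLabel n k m a i \ {a + colHeight n k m a}) := by
  obtain ⟨ha1, hank, hi1, hik, hci, hil⟩ := h1
  set c := colHeight n k m a with hc
  have hnk : a + 1 ≤ n - k := by omega
  -- m i ≥ n - k - a
  have hmi_lo : n - k - a ≤ m i := by
    have := (colHeight_iff n k m hmmono (a + 1) i hi1 hik).mpr hmu
    omega
  -- For c < j ≤ i, b_j = a + j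
  have hbj_eq : ∀ j, c < j → j ≤ i → bvec n k m j = a + j := by
    intro j hcj hji
    have hub : ¬ (n - k - a + 1 ≤ m j) := by
      intro h
      have := (colHeight_iff n k m hmmono a j (by omega) (by omega)).mp h
      omega
    have hlb : n - k - a ≤ m j :=
      le_trans hmi_lo (hmmono j i (by omega) hji hik)
    unfold bvec
    omega
  -- For 1 ≤ j ≤ c, b_j ≤ a + j - 1
  have hbj_le : ∀ j, 1 ≤ j → j ≤ c → bvec n k m j ≤ a + j - 1 := by
    intro j hj1 hjc
    have := (colHeight_iff n k m hmmono a j hj1 (by omega)).mpr hjc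
    unfold bvec
    omega
  ext x
  simp only [Finset.mem_image, Finset.mem_Icc, Finset.mem_insert, Finset.mem_sdiff,
    Finset.mem_singleton, shortLabel]
  constructor
  · rintro ⟨j, ⟨hj1, hji⟩, rfl⟩
    by_cases hjc : j ≤ c
    · have hle := hbj_le j hj1 hjc
      right
      exact ⟨⟨j, ⟨hj1, hji⟩, by omega⟩, by omega⟩
    · push_neg at hjc
      by_cases hji' : j = i
      · left
        subst hji'
        rw [hbj_eq j hjc le_rfl]
      · right
        have h2 := hbj_eq j hjc hji
        have h3 := hbj_eq (j + 1) (by omega) (by omega)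
        exact ⟨⟨j + 1, ⟨by omega, by omega⟩, by omega⟩, by omega⟩
  · rintro (rfl | ⟨⟨j, ⟨hj1, hji⟩, hx⟩, hne⟩)
    · exact ⟨i, ⟨hi1, le_rfl⟩, hbj_eq i hci le_rfl⟩
    · by_cases hjc : j ≤ c
      · have hle := hbj_le j hj1 hjc
        exact ⟨j, ⟨hj1, by omega⟩, by omega⟩
      · push_neg at hjc
        have h2 := hbj_eq j hjc hji
        -- x = a + j - 1, and x ≠ a + c forces c < j - 1
        have hxval : x = a + j - 1 := by omega
        have hcj1 : c < j - 1 := by omega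
        have h3 := hbj_eq (j - 1) hcj1 (by omega)
        exact ⟨j - 1, ⟨by omega, by omega⟩, by omega⟩
end

section
/- Suppose the box (a+1,i) belongs to μ (i.e. i ≤ μ̄_{a+1}) while the boxes (a,i) and (a,i+1) both belong to the skew diagram λ/μ (i.e. μ̄_a < i and i+1 ≤ λ̄_a), where 1 ≤ a ≤ n−k−1. Then J(a,i+1) = J(a,i) ∪ {b_1,…,b_i}. -/
lemma le_colHeight_of (n k : ℕ) (f : ℕ → ℕ)
    (hmono : ∀ i j, 1 ≤ i → i ≤ j → j ≤ k → f j ≤ f i)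
    (a i : ℕ) (h1 : 1 ≤ i) (hik : i ≤ k) (h : n - k - a + 1 ≤ f i) :
    i ≤ colHeight n k f a := by
  unfold colHeight
  calc i = (Finset.Icc 1 i).card := by simp
    _ ≤ _ := Finset.card_le_card (fun j hj => by
        simp only [Finset.mem_Icc, Finset.mem_filter] at *
        exact ⟨⟨hj.1, hj.2.trans hik⟩, h.trans (hmono j i hj.1 hj.2 hik)⟩)

lemma of_le_colHeight (n k : ℕ) (f : ℕ → ℕ)
    (hmono : ∀ i j, 1 ≤ i → i ≤ j → j ≤ k → f j ≤ f i)
    (a i : ℕ) (h1 : 1 ≤ i) (h : i ≤ colHeight n k f a) :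
    n - k - a + 1 ≤ f i := by
  by_contra hc
  push_neg at hc
  have hle : colHeight n k f a ≤ i - 1 := by
    unfold colHeight
    calc _ ≤ (Finset.Icc 1 (i-1)).card := Finset.card_le_card (fun j hj => by
          simp only [Finset.mem_Icc, Finset.mem_filter] at *
          refine ⟨hj.1.1, ?_⟩
          by_contra hji
          push_neg at hji
          have := hmono i j h1 (by omega) hj.1.2
          omega)
      _ ≤ i - 1 := by simp
  omega

theorem stmt6 (n k : ℕ) (l m : ℕ → ℕ)
    (hk : 0 < k) (hkn : k < n)
    (hlmono : ∀ i j, 1 ≤ i → i ≤ j → j ≤ k → l j ≤ l i)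
    (hl1 : l 1 ≤ n - k)
    (hmmono : ∀ i j, 1 ≤ i → i ≤ j → j ≤ k → m j ≤ m i)
    (hml : ∀ i, 1 ≤ i → i ≤ k → m i ≤ l i)
    (a i : ℕ) (ha : a ≤ n - k - 1)
    (hmu : i ≤ colHeight n k m (a + 1))
    (h1 : InSkew n k l m a i) (h2 : InSkew n k l m a (i + 1)) :
    shortLabel n k m a (i + 1) =
      shortLabel n k m a i ∪ (Finset.Icc 1 i).image (bvec n k m) := by

  obtain ⟨ha1, hank, hi1, hik, hma, hla⟩ := h1
  obtain ⟨-, -, -, hik1, -, hla1⟩ := h2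
  have hc1 : 1 ≤ n - k := by omega
  have hmi_lt : m i < n - k - a + 1 := by
    by_contra hc
    push_neg at hc
    have := le_colHeight_of n k m hmmono a i hi1 hik hc
    omega
  have hmi_ge : n - k - (a + 1) + 1 ≤ m i := of_le_colHeight n k m hmmono (a+1) i hi1 hmu
  have hmi : m i = n - k - a := by omega
  have hmtop : ∀ j, 1 ≤ j → j ≤ k → m j ≤ n - k := fun j hj1 hjk =>
    (hmmono 1 j le_rfl hj1 hjk).trans (((hml 1 le_rfl hk).trans hl1))
  ext x
  simp only [shortLabel, Finset.mem_union, Finset.mem_image, Finset.mem_Icc]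
  constructor
  · rintro ⟨j, ⟨hj1, hj2⟩, rfl⟩
    rcases Nat.lt_or_ge j (i+1) with hj | hj
    · exact Or.inl ⟨j, ⟨hj1, by omega⟩, rfl⟩
    · have hji : j = i + 1 := by omega
      subst hji
      have hm1 : m (i+1) ≤ m i := hmmono i (i+1) hi1 (by omega) hik1
      right
      refine ⟨i, ⟨hi1, le_rfl⟩, ?_⟩
      unfold bvec
      omega
  · rintro (⟨j, ⟨hj1, hj2⟩, rfl⟩ | ⟨j, ⟨hj1, hj2⟩, rfl⟩)
    · exact ⟨j, ⟨hj1, by omega⟩, rfl⟩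
    · have hmj : n - k - a ≤ m j := hmi ▸ hmmono j i hj1 hj2 hik
      have hmjk : m j ≤ n - k := hmtop j hj1 (by omega)
      rcases Nat.lt_or_ge (n - k - a) (m j) with hcase | hcase
      · -- b_j ≤ a + j - 1, use index j
        refine ⟨j, ⟨hj1, by omega⟩, ?_⟩
        unfold bvec
        omega
      · -- m j = n - k - a, b_j = a + j, use index j + 1
        have hmj1 : m (j+1) ≤ m j := hmmono j (j+1) hj1 (by omega) (by omega)
        refine ⟨j + 1, ⟨by omega, by omega⟩, ?_⟩
        unfold bvec
        omega
end

section
/- For all j ∈ ℤ one has f_{λ/μ}(j) = w_λ(t_k(w_μ^{-1}(j))), i.e. f_{λ/μ} = w_λ ∘ t_k ∘ w_μ^{-1} as bijections of ℤ. -/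
/-- The defining specification of the map `f_{λ/μ} : ℤ → ℤ`:
`f(a + μ̄_a) = a + λ̄_a`, `f(b_i) = (n - k - λ_i + i) + n`, and `n`-periodicity. -/
def IsSkewBAF (n k : ℕ) (l m : ℕ → ℕ) (f : ℤ → ℤ) : Prop :=
  (∀ a : ℕ, 1 ≤ a → a ≤ n - k →
    f ((a + colHeight n k m a : ℕ) : ℤ) = ((a + colHeight n k l a : ℕ) : ℤ)) ∧
  (∀ i : ℕ, 1 ≤ i → i ≤ k →
    f ((bvec n k m i : ℕ) : ℤ) = ((n - k - l i + i : ℕ) : ℤ) + (n : ℤ)) ∧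
  (∀ j : ℤ, f (j + (n : ℤ)) = f j + (n : ℤ))

/-- `W : ℤ → ℤ` is the extension to `ℤ` of the `k`-Grassmannian permutation `w_λ`
attached to the partition `l`, i.e. `W i = n - k - λ_i + i` for `1 ≤ i ≤ k`,
`W (k + a) = a + λ̄_a` for `1 ≤ a ≤ n - k`, and `W (j + n) = W j + n`. -/
def ExtGrassPerm (n k : ℕ) (l : ℕ → ℕ) (W : ℤ → ℤ) : Prop :=
  (∀ i : ℕ, 1 ≤ i → i ≤ k → W (i : ℤ) = ((n - k - l i + i : ℕ) : ℤ)) ∧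
  (∀ a : ℕ, 1 ≤ a → a ≤ n - k →
    W ((k + a : ℕ) : ℤ) = ((a + colHeight n k l a : ℕ) : ℤ)) ∧
  (∀ j : ℤ, W (j + (n : ℤ)) = W j + (n : ℤ))

/-- The map `t_k : ℤ → ℤ` with `t_k i = i + n` for `1 ≤ i ≤ k`, `t_k i = i` for
`k + 1 ≤ i ≤ n`, extended by `t_k (j + n) = t_k j + n`. -/
def tkfun (n k : ℕ) (j : ℤ) : ℤ := if (j - 1) % (n : ℤ) < (k : ℤ) then j + n else j

/-!
Both sides commute with the shift `j ↦ j + n`, so it suffices to compare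
`f ∘ w_μ` with `w_λ ∘ t_k` on the window `1, …, n`. There the two defining case distinctions
match: `w_μ` sends `i ≤ k` to `b_i` and `k + a` to `a + μ̄_a`, which are exactly the points at
which `f` is prescribed, and `t_k` adds `n` precisely on `1, …, k`.
-/

theorem map_add_mul_of_map_add_s9 {n : ℤ} {g : ℤ → ℤ} (hg : ∀ j, g (j + n) = g j + n)
    (q j : ℤ) : g (j + q * n) = g j + q * n := by
  induction q using Int.induction_on with
  | zero => simp
  | succ q ih => rw [add_one_mul, ← add_assoc, hg, ih, add_assoc]
  | pred q ih =>
    have h := hg (j + (-(q : ℤ) - 1) * n)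
    rw [add_assoc, ← add_one_mul, sub_add_cancel, ih] at h
    linarith

theorem eq_of_map_add_of_eqOn_Icc {n : ℤ} (hn : 0 < n) {g₁ g₂ : ℤ → ℤ}
    (hg₁ : ∀ j, g₁ (j + n) = g₁ j + n) (hg₂ : ∀ j, g₂ (j + n) = g₂ j + n)
    (hEq : ∀ x, 1 ≤ x → x ≤ n → g₁ x = g₂ x) : g₁ = g₂ := by
  funext j
  have hj : j = ((j - 1) % n + 1) + (j - 1) / n * n := by
    have := Int.emod_add_mul_ediv (j - 1) n
    linarith
  have hlo := Int.emod_nonneg (j - 1) hn.ne'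
  have hhi := Int.emod_lt_of_pos (j - 1) hn
  rw [hj, map_add_mul_of_map_add_s9 hg₁, map_add_mul_of_map_add_s9 hg₂, hEq _ (by omega) (by omega)]

theorem tkfun_add (n k : ℕ) (j : ℤ) : tkfun n k (j + n) = tkfun n k j + n := by
  unfold tkfun
  rw [add_sub_right_comm, Int.add_emod_right]
  split_ifs <;> rfl

theorem tkfun_of_le {n k : ℕ} {x : ℤ} (hx : 1 ≤ x) (hxk : x ≤ k) (hkn : k < n) :
    tkfun n k x = x + n := by
  rw [tkfun, Int.emod_eq_of_lt (by omega) (by omega), if_pos (by omega)]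

theorem tkfun_of_lt {n k : ℕ} {x : ℤ} (hkx : (k : ℤ) < x) (hxn : x ≤ n) :
    tkfun n k x = x := by
  rw [tkfun, Int.emod_eq_of_lt (by omega) (by omega), if_neg (by omega)]

theorem IsSkewBAF.comp_eqOn_Icc {n k : ℕ} {l m : ℕ → ℕ} {f Wl Wm : ℤ → ℤ} (hkn : k < n)
    (hf : IsSkewBAF n k l m f) (hWl : ExtGrassPerm n k l Wl) (hWm : ExtGrassPerm n k m Wm)
    (x : ℤ) (hx : 1 ≤ x) (hxn : x ≤ n) : f (Wm x) = Wl (tkfun n k x) := by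
  lift x to ℕ using by omega
  by_cases hxk : x ≤ k
  · rw [tkfun_of_le hx (by exact_mod_cast hxk) hkn, hWl.2.2, hWl.1 x (by omega) hxk,
      hWm.1 x (by omega) hxk]
    exact hf.2.1 x (by omega) hxk
  · obtain ⟨a, rfl⟩ : ∃ a, x = k + a := ⟨x - k, by omega⟩
    rw [tkfun_of_lt (by omega) hxn, hWl.2.1 a (by omega) (by omega),
      hWm.2.1 a (by omega) (by omega)]
    exact hf.1 a (by omega) (by omega)

theorem stmt9_general (n k : ℕ) (l m : ℕ → ℕ)
    (hkn : k < n)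
    (f : ℤ → ℤ) (hf : IsSkewBAF n k l m f)
    (Wl Wm Wminv : ℤ → ℤ)
    (hWl : ExtGrassPerm n k l Wl) (hWm : ExtGrassPerm n k m Wm)
    (hinv2 : Function.RightInverse Wminv Wm) :
    ∀ j : ℤ, f j = Wl (tkfun n k (Wminv j)) := by
  have hcomp : f ∘ Wm = Wl ∘ tkfun n k :=
    eq_of_map_add_of_eqOn_Icc (by omega)
      (fun j => by simp only [Function.comp_apply, hWm.2.2, hf.2.2])
      (fun j => by simp only [Function.comp_apply, tkfun_add, hWl.2.2])
      (fun x => hf.comp_eqOn_Icc hkn hWl hWm x)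
  intro j
  calc f j = f (Wm (Wminv j)) := by rw [hinv2 j]
    _ = Wl (tkfun n k (Wminv j)) := congrFun hcomp (Wminv j)

theorem stmt9 (n k : ℕ) (l m : ℕ → ℕ)
    (hk : 0 < k) (hkn : k < n)
    (hlmono : ∀ i j, 1 ≤ i → i ≤ j → j ≤ k → l j ≤ l i)
    (hl1 : l 1 ≤ n - k)
    (hmmono : ∀ i j, 1 ≤ i → i ≤ j → j ≤ k → m j ≤ m i)
    (hml : ∀ i, 1 ≤ i → i ≤ k → m i ≤ l i)
    (f : ℤ → ℤ) (hf : IsSkewBAF n k l m f)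
    (Wl Wm Wminv : ℤ → ℤ)
    (hWl : ExtGrassPerm n k l Wl) (hWm : ExtGrassPerm n k m Wm)
    (hinv1 : Function.LeftInverse Wminv Wm)
    (hinv2 : Function.RightInverse Wminv Wm) :
    ∀ j : ℤ, f j = Wl (tkfun n k (Wminv j)) :=
  stmt9_general n k l m hkn f hf Wl Wm Wminv hWl hWm hinv2
end

section
/- Set w_{λ/μ} := w_μ ∘ w_λ^{-1} ∈ S_n. Then for all j ∈ ℤ one has f_{λ/μ}(j) ≡ w_{λ/μ}^{-1}(j) (mod n), i.e. the reduction of f_{λ/μ} modulo n equals the permutation w_{λ/μ}^{-1}. -/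
/-!
`f_{λ/μ}`, `w_λ` and `w_μ` all commute with translation by `n`, so it suffices
to check `f_{λ/μ} ∘ w_μ ≡ w_λ (mod n)` on the window `1, …, n`. There the defining
equations of `f_{λ/μ}` are exactly the values of `w_μ` and `w_λ`: `w_μ(i) = b_i` is sent to
`w_λ(i) + n` for `i ≤ k`, and `w_μ(k + a) = a + μ̄_a` is sent to `w_λ(k + a) = a + λ̄_a`.
-/

namespace Int

variable {c : ℤ} {g h : ℤ → ℤ}

theorem periodic_sub_id_of_map_add (hg : ∀ j, g (j + c) = g j + c) :
    Function.Periodic (fun j => g j - j) c := fun j => by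
  simp only [hg]; ring

theorem map_add_mul_of_map_add (hg : ∀ j, g (j + c) = g j + c) (q j : ℤ) :
    g (j + q * c) = g j + q * c := by
  have hper := (periodic_sub_id_of_map_add hg).int_mul q j
  rw [Int.cast_id] at hper
  linarith

theorem modEq_of_modEq_on_window (hc : 0 < c) (hg : ∀ j, g (j + c) = g j + c)
    (hh : ∀ j, h (j + c) = h j + c) (hwin : ∀ t, 1 ≤ t → t ≤ c → g t ≡ h t [ZMOD c]) (t : ℤ) :
    g t ≡ h t [ZMOD c] := by
  set r := (t - 1) % c + 1
  have hdecomp : t = r + (t - 1) / c * c := by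
    linarith [Int.emod_add_ediv_mul (t - 1) c]
  have hr : 1 ≤ r ∧ r ≤ c := by
    constructor <;> linarith [Int.emod_nonneg (t - 1) hc.ne', Int.emod_lt_of_pos (t - 1) hc]
  rw [hdecomp, map_add_mul_of_map_add hg, map_add_mul_of_map_add hh]
  exact (hwin r hr.1 hr.2).add_right _

end Int

theorem IsSkewBAF.comp_modEq_on_window {n k : ℕ} {l m : ℕ → ℕ} {f Wl Wm : ℤ → ℤ}
    (hf : IsSkewBAF n k l m f) (hWl : ExtGrassPerm n k l Wl) (hWm : ExtGrassPerm n k m Wm)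
    (t : ℤ) (ht1 : 1 ≤ t) (htn : t ≤ n) : f (Wm t) ≡ Wl t [ZMOD n] := by
  lift t to ℕ using by omega
  norm_cast at ht1 htn
  obtain ⟨hf1, hf2, -⟩ := hf
  obtain ⟨hWl1, hWl2, -⟩ := hWl
  obtain ⟨hWm1, hWm2, -⟩ := hWm
  rcases le_or_gt t k with htk | hkt
  · rw [hWm1 t ht1 htk, hWl1 t ht1 htk]
    have hb := hf2 t ht1 htk
    rw [bvec] at hb
    rw [hb]
    exact Int.add_modEq_right
  · obtain ⟨a, rfl⟩ := Nat.exists_eq_add_of_lt hkt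
    have ha : 1 ≤ a + 1 ∧ a + 1 ≤ n - k := ⟨by omega, by omega⟩
    rw [Nat.add_assoc, hWm2 _ ha.1 ha.2, hf1 _ ha.1 ha.2, hWl2 _ ha.1 ha.2]

theorem stmt10_general (n k : ℕ) (l m : ℕ → ℕ)
    (hkn : k < n)
    (f : ℤ → ℤ) (hf : IsSkewBAF n k l m f)
    (Wl Wm Wminv : ℤ → ℤ)
    (hWl : ExtGrassPerm n k l Wl) (hWm : ExtGrassPerm n k m Wm)
    (hinv2 : Function.RightInverse Wminv Wm) :
    ∀ j : ℤ, f j ≡ Wl (Wminv j) [ZMOD (n : ℤ)] := by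
  have hfWm : ∀ t, f (Wm t) ≡ Wl t [ZMOD n] :=
    Int.modEq_of_modEq_on_window (by omega) (fun j => by rw [hWm.2.2, hf.2.2]) hWl.2.2
      (hf.comp_modEq_on_window hWl hWm)
  intro j
  simpa only [hinv2 j] using hfWm (Wminv j)

theorem stmt10 (n k : ℕ) (l m : ℕ → ℕ)
    (hk : 0 < k) (hkn : k < n)
    (hlmono : ∀ i j, 1 ≤ i → i ≤ j → j ≤ k → l j ≤ l i)
    (hl1 : l 1 ≤ n - k)
    (hmmono : ∀ i j, 1 ≤ i → i ≤ j → j ≤ k → m j ≤ m i)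
    (hml : ∀ i, 1 ≤ i → i ≤ k → m i ≤ l i)
    (f : ℤ → ℤ) (hf : IsSkewBAF n k l m f)
    (Wl Wm Wminv : ℤ → ℤ)
    (hWl : ExtGrassPerm n k l Wl) (hWm : ExtGrassPerm n k m Wm)
    (hinv1 : Function.LeftInverse Wminv Wm)
    (hinv2 : Function.RightInverse Wminv Wm) :
    ∀ j : ℤ, f j ≡ Wl (Wminv j) [ZMOD (n : ℤ)] :=
  stmt10_general n k l m hkn f hf Wl Wm Wminv hWl hWm hinv2
end
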